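/- For ρdf graphs G and H with H ground (H contains no blank nodes): G ⊨ H if and only if H ⊆ Cl(G). -/

import Mathlib

/-!
Formalization of ρdf and ρdf⊥¬ (triple languages, semantics, deductive systems),
following Muñoz et al. and "Extending RDFS with negative statements".
-/

namespace Rho

/-- URI references: the ρdf⊥¬ vocabulary elements, atomic resources `res false n`
together with their negations `res true n` (negation flips the Boolean, so ¬¬r = r),
and universal-quantification resources `star b n` = ★_{res b n}. -/
inductive URI : Type where
  | sp | sc | typ | dom | rng | botc | botp
  | res (b : Bool) (n : ℕ)
  | star (b : Bool) (n : ℕ)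
deriving DecidableEq

/-- Terms: URIs, blank nodes and literals (pairwise disjoint alphabets). -/
inductive Term : Type where
  | uri (u : URI)
  | blank (n : ℕ)
  | lit (n : ℕ)
deriving DecidableEq

/-- The ρdf vocabulary {sp, sc, type, dom, range}. -/
def rhoVoc : Set URI := {URI.sp, URI.sc, URI.typ, URI.dom, URI.rng}

/-- The ρdf⊥¬ vocabulary: ρdf plus ⊥c and ⊥p. -/
def botVoc : Set URI := rhoVoc ∪ {URI.botc, URI.botp}

def URI.isStar : URI → Prop
  | URI.star _ _ => True
  | _ => False

def Term.isStar : Term → Prop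
  | Term.uri (URI.star _ _) => True
  | _ => False

def Term.isBlank : Term → Prop
  | Term.blank _ => True
  | _ => False

def Term.isLit : Term → Prop
  | Term.lit _ => True
  | _ => False

def Term.isVoc : Term → Prop
  | Term.uri u => u ∈ rhoVoc
  | _ => False

def Term.isBotVoc : Term → Prop
  | Term.uri u => u ∈ botVoc
  | _ => False

/-- Negation of terms: flips the sign of an atomic/negated resource
(identity on all other terms, where negation is not defined). -/
def negT : Term → Term
  | Term.uri (URI.res b n) => Term.uri (URI.res (!b) n)
  | t => t

/-- An RDF triple ⟨s, p, o⟩ ∈ UBL × U × UBL. -/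
structure Triple : Type where
  s : Term
  p : URI
  o : Term
deriving DecidableEq

/-- ρdf triple: subject and object are not in the ρdf vocabulary. -/
def Triple.okRdf (τ : Triple) : Prop := ¬ τ.s.isVoc ∧ ¬ τ.o.isVoc

/-- ρdf⊥¬ triple: s, o not in the ρdf⊥¬ vocabulary, p not of the form ★_c,
s and o not both of the form ★_c, and if p is in the ρdf⊥¬ vocabulary then
neither s nor o is of the form ★_c. -/
def Triple.okN (τ : Triple) : Prop :=
  ¬ τ.s.isBotVoc ∧ ¬ τ.o.isBotVoc ∧ ¬ τ.p.isStar ∧ ¬ (τ.s.isStar ∧ τ.o.isStar) ∧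
    (τ.p ∈ botVoc → ¬ τ.s.isStar ∧ ¬ τ.o.isStar)

/-- A graph is a finite set of triples. -/
abbrev Graph := Finset Triple

/-- A ρdf graph. -/
def IsRdfGraph (G : Graph) : Prop := ∀ τ ∈ G, τ.okRdf

/-- A ρdf⊥¬ graph. -/
def IsNGraph (G : Graph) : Prop := ∀ τ ∈ G, τ.okN

/-- A ground graph contains no blank nodes. -/
def Ground (G : Graph) : Prop := ∀ τ ∈ G, ¬ τ.s.isBlank ∧ ¬ τ.o.isBlank

/-- No term of the form ★_c occurs in the graph. -/
def StarFree (G : Graph) : Prop := ∀ τ ∈ G, ¬ τ.s.isStar ∧ ¬ τ.o.isStar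

/-- The universe of a graph: the set of terms occurring in its triples. -/
def uni (G : Graph) : Set Term := {t | ∃ τ ∈ G, t = τ.s ∨ t = Term.uri τ.p ∨ t = τ.o}

def rhoVocT : Set Term := Term.uri '' rhoVoc
def botVocT : Set Term := Term.uri '' botVoc

/-- A map: a function on terms preserving URIs and literals. -/
def IsMap (μ : Term → Term) : Prop :=
  (∀ u, μ (Term.uri u) = Term.uri u) ∧ ∀ n, μ (Term.lit n) = Term.lit n

def mapT (μ : Term → Term) (τ : Triple) : Triple := ⟨μ τ.s, τ.p, μ τ.o⟩

def mapG (μ : Term → Term) (G : Graph) : Graph := G.image (mapT μ)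

/-! ### ρdf semantics -/

/-- A ρdf interpretation (raw data, with carrier the type of terms; the
interpretation of literals is the identity, as in the paper). -/
structure Interp : Type where
  ΔR : Set Term
  ΔP : Set Term
  ΔC : Set Term
  ΔL : Set Term
  extP : Term → Set (Term × Term)
  extC : Term → Set Term
  int : Term → Term

def Interp.iv (I : Interp) (e : URI) : Term := I.int (Term.uri e)

/-- `I` is a ρdf interpretation over the vocabulary `V`. -/
structure IsInterp (I : Interp) (V : Set Term) : Prop where
  finR : I.ΔR.Finite
  neR : I.ΔR.Nonempty
  finP : I.ΔP.Finite
  neP : I.ΔP.Nonempty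
  finC : I.ΔC.Finite
  neC : I.ΔC.Nonempty
  finL : I.ΔL.Finite
  neL : I.ΔL.Nonempty
  hCR : I.ΔC ⊆ I.ΔR
  hLR : I.ΔL ⊆ I.ΔR
  hlit : ∀ n, Term.lit n ∈ V → Term.lit n ∈ I.ΔL
  hextP : ∀ p ∈ I.ΔP, I.extP p ⊆ I.ΔR ×ˢ I.ΔR
  hextC : ∀ c ∈ I.ΔC, I.extC c ⊆ I.ΔR
  hint : ∀ t ∈ V, ¬ t.isBlank → I.int t ∈ I.ΔR ∪ I.ΔP
  hintlit : ∀ n, I.int (Term.lit n) = Term.lit n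
  hintblank : ∀ n, I.int (Term.blank n) ∈ I.ΔR

/-- `I` is a model of the graph `G` (reflexive-relaxed ρdf semantics). -/
structure Models (I : Interp) (G : Graph) : Prop where
  interp : IsInterp I (rhoVocT ∪ uni G)
  simple : ∀ τ ∈ G, I.iv τ.p ∈ I.ΔP ∧ (I.int τ.s, I.int τ.o) ∈ I.extP (I.iv τ.p)
  sp_trans : ∀ p q r, p ∈ I.ΔP → q ∈ I.ΔP → r ∈ I.ΔP →
    (p, q) ∈ I.extP (I.iv URI.sp) → (q, r) ∈ I.extP (I.iv URI.sp) →
    (p, r) ∈ I.extP (I.iv URI.sp)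
  sp_sub : ∀ p q, (p, q) ∈ I.extP (I.iv URI.sp) →
    p ∈ I.ΔP ∧ q ∈ I.ΔP ∧ I.extP p ⊆ I.extP q
  sc_trans : ∀ c d e, c ∈ I.ΔC → d ∈ I.ΔC → e ∈ I.ΔC →
    (c, d) ∈ I.extP (I.iv URI.sc) → (d, e) ∈ I.extP (I.iv URI.sc) →
    (c, e) ∈ I.extP (I.iv URI.sc)
  sc_sub : ∀ c d, (c, d) ∈ I.extP (I.iv URI.sc) →
    c ∈ I.ΔC ∧ d ∈ I.ΔC ∧ I.extC c ⊆ I.extC d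
  typI1 : ∀ x c, c ∈ I.ΔC → (x ∈ I.extC c ↔ (x, c) ∈ I.extP (I.iv URI.typ))
  typI2 : ∀ p c x y, (p, c) ∈ I.extP (I.iv URI.dom) → (x, y) ∈ I.extP p → x ∈ I.extC c
  typI3 : ∀ p c x y, (p, c) ∈ I.extP (I.iv URI.rng) → (x, y) ∈ I.extP p → y ∈ I.extC c
  typII1 : ∀ e ∈ rhoVoc, I.iv e ∈ I.ΔP
  typII2 : ∀ p c, (p, c) ∈ I.extP (I.iv URI.dom) → p ∈ I.ΔP ∧ c ∈ I.ΔC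
  typII3 : ∀ p c, (p, c) ∈ I.extP (I.iv URI.rng) → p ∈ I.ΔP ∧ c ∈ I.ΔC
  typII4 : ∀ x c, (x, c) ∈ I.extP (I.iv URI.typ) → c ∈ I.ΔC

/-- ρdf entailment. -/
def Entails (G H : Graph) : Prop := ∀ I : Interp, Models I G → Models I H

/-! ### The ρdf deductive system -/

/-- Instantiations of the ρdf deductive rules (2)-(5): premises / conclusion. -/
inductive RuleInst : Finset Triple → Triple → Prop where
  | sp_trans (a b c : Term) :
      RuleInst {⟨a, URI.sp, b⟩, ⟨b, URI.sp, c⟩} ⟨a, URI.sp, c⟩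
  | sp_mono (d e : URI) (x y : Term) :
      RuleInst {⟨Term.uri d, URI.sp, Term.uri e⟩, ⟨x, d, y⟩} ⟨x, e, y⟩
  | sc_trans (a b c : Term) :
      RuleInst {⟨a, URI.sc, b⟩, ⟨b, URI.sc, c⟩} ⟨a, URI.sc, c⟩
  | sc_mono (a b x : Term) :
      RuleInst {⟨a, URI.sc, b⟩, ⟨x, URI.typ, a⟩} ⟨x, URI.typ, b⟩
  | dom (d : URI) (b x y : Term) :
      RuleInst {⟨Term.uri d, URI.dom, b⟩, ⟨x, d, y⟩} ⟨x, URI.typ, b⟩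
  | rng (d : URI) (b x y : Term) :
      RuleInst {⟨Term.uri d, URI.rng, b⟩, ⟨x, d, y⟩} ⟨y, URI.typ, b⟩
  | idom (a b x y : Term) (d : URI) :
      RuleInst {⟨a, URI.dom, b⟩, ⟨Term.uri d, URI.sp, a⟩, ⟨x, d, y⟩} ⟨x, URI.typ, b⟩
  | irng (a b x y : Term) (d : URI) :
      RuleInst {⟨a, URI.rng, b⟩, ⟨Term.uri d, URI.sp, a⟩, ⟨x, d, y⟩} ⟨y, URI.typ, b⟩

/-- The ρdf rules without the implicit typing rules (5a), (5b). -/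
inductive RuleInstCore : Finset Triple → Triple → Prop where
  | sp_trans (a b c : Term) :
      RuleInstCore {⟨a, URI.sp, b⟩, ⟨b, URI.sp, c⟩} ⟨a, URI.sp, c⟩
  | sp_mono (d e : URI) (x y : Term) :
      RuleInstCore {⟨Term.uri d, URI.sp, Term.uri e⟩, ⟨x, d, y⟩} ⟨x, e, y⟩
  | sc_trans (a b c : Term) :
      RuleInstCore {⟨a, URI.sc, b⟩, ⟨b, URI.sc, c⟩} ⟨a, URI.sc, c⟩
  | sc_mono (a b x : Term) :
      RuleInstCore {⟨a, URI.sc, b⟩, ⟨x, URI.typ, a⟩} ⟨x, URI.typ, b⟩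
  | dom (d : URI) (b x y : Term) :
      RuleInstCore {⟨Term.uri d, URI.dom, b⟩, ⟨x, d, y⟩} ⟨x, URI.typ, b⟩
  | rng (d : URI) (b x y : Term) :
      RuleInstCore {⟨Term.uri d, URI.rng, b⟩, ⟨x, d, y⟩} ⟨y, URI.typ, b⟩

/-- The additional deductive rules of ρdf⊥¬. -/
inductive ExtraRule : Finset Triple → Triple → Prop where
  -- (2c)
  | sp_neg (a b : Bool) (m n : ℕ) :
      ExtraRule {⟨Term.uri (URI.res a m), URI.sp, Term.uri (URI.res b n)⟩}
        ⟨Term.uri (URI.res (!b) n), URI.sp, Term.uri (URI.res (!a) m)⟩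
  -- (2d)
  | sp_star_o (x : Term) (d e : URI) (cb : Bool) (cn : ℕ) :
      ExtraRule {⟨x, d, Term.uri (URI.star cb cn)⟩, ⟨Term.uri d, URI.sp, Term.uri e⟩}
        ⟨x, e, Term.uri (URI.star cb cn)⟩
  -- (2e)
  | sp_star_s (x : Term) (d e : URI) (cb : Bool) (cn : ℕ) :
      ExtraRule {⟨Term.uri (URI.star cb cn), d, x⟩, ⟨Term.uri d, URI.sp, Term.uri e⟩}
        ⟨Term.uri (URI.star cb cn), e, x⟩
  -- (3c)
  | sc_neg (a b : Bool) (m n : ℕ) :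
      ExtraRule {⟨Term.uri (URI.res a m), URI.sc, Term.uri (URI.res b n)⟩}
        ⟨Term.uri (URI.res (!b) n), URI.sc, Term.uri (URI.res (!a) m)⟩
  -- (3d)
  | sc_star_o (a : Term) (d : URI) (bb cb : Bool) (bn cn : ℕ) :
      ExtraRule {⟨a, d, Term.uri (URI.star cb cn)⟩,
                 ⟨Term.uri (URI.res bb bn), URI.sc, Term.uri (URI.res cb cn)⟩}
        ⟨a, d, Term.uri (URI.star bb bn)⟩
  -- (3e)
  | sc_star_s (a : Term) (d : URI) (bb cb : Bool) (bn cn : ℕ) :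
      ExtraRule {⟨Term.uri (URI.star cb cn), d, a⟩,
                 ⟨Term.uri (URI.res bb bn), URI.sc, Term.uri (URI.res cb cn)⟩}
        ⟨Term.uri (URI.star bb bn), d, a⟩
  -- (4c)
  | dom_neg (db bb : Bool) (dn bn : ℕ) (x z y : Term) :
      ExtraRule {⟨Term.uri (URI.res db dn), URI.dom, Term.uri (URI.res bb bn)⟩,
                 ⟨x, URI.typ, Term.uri (URI.res (!bb) bn)⟩,
                 ⟨z, URI.res db dn, y⟩}
        ⟨x, URI.res (!db) dn, y⟩
  -- (4d)
  | rng_neg (db bb : Bool) (dn bn : ℕ) (x z y : Term) :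
      ExtraRule {⟨Term.uri (URI.res db dn), URI.rng, Term.uri (URI.res bb bn)⟩,
                 ⟨y, URI.typ, Term.uri (URI.res (!bb) bn)⟩,
                 ⟨x, URI.res db dn, z⟩}
        ⟨x, URI.res (!db) dn, y⟩
  -- (4e)
  | star_inst_o (a y : Term) (d : URI) (cb : Bool) (cn : ℕ) :
      ExtraRule {⟨a, d, Term.uri (URI.star cb cn)⟩, ⟨y, URI.typ, Term.uri (URI.res cb cn)⟩}
        ⟨a, d, y⟩
  -- (4f)
  | star_inst_s (b x : Term) (d : URI) (cb : Bool) (cn : ℕ) :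
      ExtraRule {⟨Term.uri (URI.star cb cn), d, b⟩, ⟨x, URI.typ, Term.uri (URI.res cb cn)⟩}
        ⟨x, d, b⟩
  -- (4g)
  | star_conflict_o (a y : Term) (db cb : Bool) (dn cn : ℕ) :
      ExtraRule {⟨a, URI.res db dn, Term.uri (URI.star cb cn)⟩, ⟨a, URI.res (!db) dn, y⟩}
        ⟨y, URI.typ, Term.uri (URI.res (!cb) cn)⟩
  -- (4h)
  | star_conflict_s (b x : Term) (db cb : Bool) (dn cn : ℕ) :
      ExtraRule {⟨Term.uri (URI.star cb cn), URI.res db dn, b⟩, ⟨x, URI.res (!db) dn, b⟩}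
        ⟨x, URI.typ, Term.uri (URI.res (!cb) cn)⟩
  -- (6a)
  | botc_symm (a b : Term) : ExtraRule {⟨a, URI.botc, b⟩} ⟨b, URI.botc, a⟩
  -- (6b)
  | botc_subtrans (a b c : Term) :
      ExtraRule {⟨a, URI.botc, b⟩, ⟨c, URI.sc, a⟩} ⟨c, URI.botc, b⟩
  -- (6c)
  | botc_exh (a b : Term) : ExtraRule {⟨a, URI.botc, a⟩} ⟨a, URI.botc, b⟩
  -- (6d)
  | botc_sc (a : Term) (b : Bool) (n : ℕ) :
      ExtraRule {⟨a, URI.botc, Term.uri (URI.res b n)⟩} ⟨a, URI.sc, Term.uri (URI.res (!b) n)⟩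
  -- (6e)
  | sc_botc (a : Term) (b : Bool) (n : ℕ) :
      ExtraRule {⟨a, URI.sc, Term.uri (URI.res b n)⟩} ⟨a, URI.botc, Term.uri (URI.res (!b) n)⟩
  -- (7a)
  | botp_symm (a b : Term) : ExtraRule {⟨a, URI.botp, b⟩} ⟨b, URI.botp, a⟩
  -- (7b)
  | botp_subtrans (a b c : Term) :
      ExtraRule {⟨a, URI.botp, b⟩, ⟨c, URI.sp, a⟩} ⟨c, URI.botp, b⟩
  -- (7c)
  | botp_exh (a b : Term) : ExtraRule {⟨a, URI.botp, a⟩} ⟨a, URI.botp, b⟩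
  -- (7d)
  | botp_sp (a : Term) (b : Bool) (n : ℕ) :
      ExtraRule {⟨a, URI.botp, Term.uri (URI.res b n)⟩} ⟨a, URI.sp, Term.uri (URI.res (!b) n)⟩
  -- (7e)
  | sp_botp (a : Term) (b : Bool) (n : ℕ) :
      ExtraRule {⟨a, URI.sp, Term.uri (URI.res b n)⟩} ⟨a, URI.botp, Term.uri (URI.res (!b) n)⟩
  -- (8a)
  | cross_dom (a b c d : Term) :
      ExtraRule {⟨a, URI.dom, c⟩, ⟨b, URI.dom, d⟩, ⟨c, URI.botc, d⟩} ⟨a, URI.botp, b⟩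
  -- (8b)
  | cross_rng (a b c d : Term) :
      ExtraRule {⟨a, URI.rng, c⟩, ⟨b, URI.rng, d⟩, ⟨c, URI.botc, d⟩} ⟨a, URI.botp, b⟩

/-- All ρdf⊥¬ deductive rules: the ρdf rules plus the additional rules. -/
def RuleInstN (R : Finset Triple) (τ : Triple) : Prop := RuleInst R τ ∨ ExtraRule R τ

/-- The ρdf⊥¬ rules without the implicit typing rules (5a), (5b). -/
def RuleInstNCore (R : Finset Triple) (τ : Triple) : Prop := RuleInstCore R τ ∨ ExtraRule R τ

/-- One derivation step (including the map rule (1a)). -/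
inductive Step (rules : Finset Triple → Triple → Prop) (ok : Triple → Prop) :
    Graph → Graph → Prop where
  | map {G G' : Graph} (μ : Term → Term) (hμ : IsMap μ) (h : mapG μ G' ⊆ G) :
      Step rules ok G G'
  | sub {G G' : Graph} (h : G' ⊆ G) : Step rules ok G G'
  | rule {G : Graph} (R : Finset Triple) (τ : Triple)
      (hR : R ⊆ G) (hr : rules R τ) (hok : ok τ) : Step rules ok G (insert τ G)

/-- One derivation step without the map rule (1a). -/
inductive StepNM (rules : Finset Triple → Triple → Prop) (ok : Triple → Prop) :
    Graph → Graph → Prop where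
  | sub {G G' : Graph} (h : G' ⊆ G) : StepNM rules ok G G'
  | rule {G : Graph} (R : Finset Triple) (τ : Triple)
      (hR : R ⊆ G) (hr : rules R τ) (hok : ok τ) : StepNM rules ok G (insert τ G)

/-- Derivability (a proof is a finite sequence of graphs related by steps). -/
def Deriv (rules : Finset Triple → Triple → Prop) (ok : Triple → Prop) :
    Graph → Graph → Prop := Relation.ReflTransGen (Step rules ok)

/-- Derivability without the map rule (1a). -/
def DerivNM (rules : Finset Triple → Triple → Prop) (ok : Triple → Prop) :
    Graph → Graph → Prop := Relation.ReflTransGen (StepNM rules ok)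

/-- The closure: all triples derivable without rule (1a). -/
def Closure (rules : Finset Triple → Triple → Prop) (ok : Triple → Prop) (G : Graph) :
    Set Triple := {τ | ∃ H : Graph, DerivNM rules ok G H ∧ τ ∈ H}

/-- ρdf derivability `G ⊢ H`. -/
def DerivRdf : Graph → Graph → Prop := Deriv RuleInst Triple.okRdf

/-- ρdf closure `Cl(G)`. -/
def Cl : Graph → Set Triple := Closure RuleInst Triple.okRdf

/-- ρdf closure computed without the implicit typing rules (5). -/
def ClCore : Graph → Set Triple := Closure RuleInstCore Triple.okRdf

/-- ρdf⊥¬ derivability `G ⊢⊥¬ H`. -/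
def DerivN : Graph → Graph → Prop := Deriv RuleInstN Triple.okN

/-- ρdf⊥¬ closure `Cl⊥¬(G)`. -/
def ClN : Graph → Set Triple := Closure RuleInstN Triple.okN

/-- ρdf⊥¬ closure computed without the implicit typing rules (5). -/
def ClNCore : Graph → Set Triple := Closure RuleInstNCore Triple.okN

/-- `S` is closed under the given rules. -/
def ClosedUnder (rules : Finset Triple → Triple → Prop) (ok : Triple → Prop)
    (S : Set Triple) : Prop :=
  ∀ R τ, rules R τ → ok τ → ↑R ⊆ S → τ ∈ S

/-! ### ρdf⊥¬ semantics -/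

/-- A ρdf⊥¬ interpretation (raw data). -/
structure InterpN : Type where
  ΔR : Set Term
  ΔP : Set Term
  ΔC : Set Term
  ΔL : Set Term
  compl : Term → Term
  extPp : Term → Set (Term × Term)
  extPn : Term → Set (Term × Term)
  extCp : Term → Set Term
  extCn : Term → Set Term
  int : Term → Term

def InterpN.iv (I : InterpN) (e : URI) : Term := I.int (Term.uri e)

/-- `I` is a ρdf⊥¬ interpretation over the vocabulary `V`. -/
structure IsInterpN (I : InterpN) (V : Set Term) : Prop where
  finR : I.ΔR.Finite
  neR : I.ΔR.Nonempty
  finP : I.ΔP.Finite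
  neP : I.ΔP.Nonempty
  finC : I.ΔC.Finite
  neC : I.ΔC.Nonempty
  finL : I.ΔL.Finite
  neL : I.ΔL.Nonempty
  hCR : I.ΔC ⊆ I.ΔR
  hLR : I.ΔL ⊆ I.ΔR
  complR : ∀ t ∈ I.ΔR, I.compl t ∈ I.ΔR
  complP : ∀ t ∈ I.ΔP, I.compl t ∈ I.ΔP
  complC : ∀ t ∈ I.ΔC, I.compl t ∈ I.ΔC
  complInvol : ∀ t ∈ I.ΔR ∪ I.ΔP ∪ I.ΔC, I.compl (I.compl t) = t
  hlit : ∀ n, Term.lit n ∈ V → Term.lit n ∈ I.ΔL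
  hPneg : ∀ p ∈ I.ΔP, I.extPp (I.compl p) = I.extPn p
  hCneg : ∀ c ∈ I.ΔC, I.extCp (I.compl c) = I.extCn c
  hextPp : ∀ p ∈ I.ΔP, I.extPp p ⊆ I.ΔR ×ˢ I.ΔR
  hextPn : ∀ p ∈ I.ΔP, I.extPn p ⊆ I.ΔR ×ˢ I.ΔR
  hextCp : ∀ c ∈ I.ΔC, I.extCp c ⊆ I.ΔR
  hextCn : ∀ c ∈ I.ΔC, I.extCn c ⊆ I.ΔR
  hint : ∀ t ∈ V, ¬ t.isBlank → ¬ t.isStar → I.int t ∈ I.ΔR ∪ I.ΔP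
  hintneg : ∀ (b : Bool) (n : ℕ),
    I.int (Term.uri (URI.res (!b) n)) = I.compl (I.int (Term.uri (URI.res b n)))
  hintlit : ∀ n, I.int (Term.lit n) = Term.lit n
  hintblank : ∀ n, I.int (Term.blank n) ∈ I.ΔR

/-- `I` is a ρdf⊥¬-model of the graph `G`. -/
structure ModelsN (I : InterpN) (G : Graph) : Prop where
  interp : IsInterpN I (botVocT ∪ uni G)
  -- Simple
  simple1 : ∀ τ ∈ G, ¬ τ.s.isStar → ¬ τ.o.isStar →
    I.iv τ.p ∈ I.ΔP ∧ (I.int τ.s, I.int τ.o) ∈ I.extPp (I.iv τ.p)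
  simple2 : ∀ τ ∈ G, ∀ (b : Bool) (n : ℕ), τ.o = Term.uri (URI.star b n) →
    I.iv τ.p ∈ I.ΔP ∧ I.int (Term.uri (URI.res b n)) ∈ I.ΔC ∧
    ∀ y ∈ I.extCp (I.int (Term.uri (URI.res b n))), (I.int τ.s, y) ∈ I.extPp (I.iv τ.p)
  simple3 : ∀ τ ∈ G, ∀ (b : Bool) (n : ℕ), τ.s = Term.uri (URI.star b n) →
    I.iv τ.p ∈ I.ΔP ∧ I.int (Term.uri (URI.res b n)) ∈ I.ΔC ∧
    ∀ x ∈ I.extCp (I.int (Term.uri (URI.res b n))), (x, I.int τ.o) ∈ I.extPp (I.iv τ.p)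
  simple4 : ∀ τ ∈ G, ∀ (b : Bool) (n : ℕ), τ.o = Term.uri (URI.star b n) →
    I.iv τ.p ∈ I.ΔP ∧ I.int (Term.uri (URI.res b n)) ∈ I.ΔC ∧
    ∀ y, (I.int τ.s, y) ∈ I.extPn (I.iv τ.p) → y ∈ I.extCn (I.int (Term.uri (URI.res b n)))
  simple5 : ∀ τ ∈ G, ∀ (b : Bool) (n : ℕ), τ.s = Term.uri (URI.star b n) →
    I.iv τ.p ∈ I.ΔP ∧ I.int (Term.uri (URI.res b n)) ∈ I.ΔC ∧
    ∀ x, (x, I.int τ.o) ∈ I.extPn (I.iv τ.p) → x ∈ I.extCn (I.int (Term.uri (URI.res b n)))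
  -- Subproperty
  sp_trans : ∀ p q r, p ∈ I.ΔP → q ∈ I.ΔP → r ∈ I.ΔP →
    (p, q) ∈ I.extPp (I.iv URI.sp) → (q, r) ∈ I.extPp (I.iv URI.sp) →
    (p, r) ∈ I.extPp (I.iv URI.sp)
  sp_sub : ∀ p q, (p, q) ∈ I.extPp (I.iv URI.sp) →
    p ∈ I.ΔP ∧ q ∈ I.ΔP ∧ I.extPp p ⊆ I.extPp q
  sp_contra : ∀ p q, p ∈ I.ΔP → q ∈ I.ΔP →
    ((p, q) ∈ I.extPp (I.iv URI.sp) ↔ (I.compl q, I.compl p) ∈ I.extPp (I.iv URI.sp))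
  -- Subclass
  sc_trans : ∀ c d e, c ∈ I.ΔC → d ∈ I.ΔC → e ∈ I.ΔC →
    (c, d) ∈ I.extPp (I.iv URI.sc) → (d, e) ∈ I.extPp (I.iv URI.sc) →
    (c, e) ∈ I.extPp (I.iv URI.sc)
  sc_sub : ∀ c d, (c, d) ∈ I.extPp (I.iv URI.sc) →
    c ∈ I.ΔC ∧ d ∈ I.ΔC ∧ I.extCp c ⊆ I.extCp d
  sc_contra : ∀ c d, c ∈ I.ΔC → d ∈ I.ΔC →
    ((c, d) ∈ I.extPp (I.iv URI.sc) ↔ (I.compl d, I.compl c) ∈ I.extPp (I.iv URI.sc))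
  -- Typing I
  typI1 : ∀ x c, c ∈ I.ΔC → (x ∈ I.extCp c ↔ (x, c) ∈ I.extPp (I.iv URI.typ))
  typI2 : ∀ p c x y, (p, c) ∈ I.extPp (I.iv URI.dom) → (x, y) ∈ I.extPp p → x ∈ I.extCp c
  typI3 : ∀ p c x y, (p, c) ∈ I.extPp (I.iv URI.rng) → (x, y) ∈ I.extPp p → y ∈ I.extCp c
  typI4 : ∀ p c x y, (p, c) ∈ I.extPp (I.iv URI.dom) → x ∈ I.extCn c →
    (∃ x', (x', y) ∈ I.extPp p) → (x, y) ∈ I.extPn p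
  typI5 : ∀ p c x y, (p, c) ∈ I.extPp (I.iv URI.rng) → y ∈ I.extCn c →
    (∃ y', (x, y') ∈ I.extPp p) → (x, y) ∈ I.extPn p
  -- Typing II
  typII1 : ∀ e ∈ botVoc, I.iv e ∈ I.ΔP
  typII2 : ∀ p c, (p, c) ∈ I.extPp (I.iv URI.dom) → p ∈ I.ΔP ∧ c ∈ I.ΔC
  typII3 : ∀ p c, (p, c) ∈ I.extPp (I.iv URI.rng) → p ∈ I.ΔP ∧ c ∈ I.ΔC
  typII4 : ∀ x c, (x, c) ∈ I.extPp (I.iv URI.typ) → c ∈ I.ΔC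
  -- Disjointness I
  disjI1 : ∀ c d, (c, d) ∈ I.extPp (I.iv URI.botc) → c ∈ I.ΔC ∧ d ∈ I.ΔC
  disjI2 : ∀ p q, (p, q) ∈ I.extPp (I.iv URI.botp) → p ∈ I.ΔP ∧ q ∈ I.ΔP
  disjI3_symm : ∀ c d, (c, d) ∈ I.extPp (I.iv URI.botc) → (d, c) ∈ I.extPp (I.iv URI.botc)
  disjI3_subtrans : ∀ c d e, (c, d) ∈ I.extPp (I.iv URI.botc) →
    (e, c) ∈ I.extPp (I.iv URI.sc) → (e, d) ∈ I.extPp (I.iv URI.botc)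
  disjI3_exh : ∀ c d, (c, c) ∈ I.extPp (I.iv URI.botc) → d ∈ I.ΔC →
    (c, d) ∈ I.extPp (I.iv URI.botc)
  disjI4_symm : ∀ p q, (p, q) ∈ I.extPp (I.iv URI.botp) → (q, p) ∈ I.extPp (I.iv URI.botp)
  disjI4_subtrans : ∀ p q r, (p, q) ∈ I.extPp (I.iv URI.botp) →
    (r, p) ∈ I.extPp (I.iv URI.sp) → (r, q) ∈ I.extPp (I.iv URI.botp)
  disjI4_exh : ∀ p q, (p, p) ∈ I.extPp (I.iv URI.botp) → q ∈ I.ΔP →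
    (p, q) ∈ I.extPp (I.iv URI.botp)
  -- Disjointness II
  disjII1 : ∀ p q c d, (p, c) ∈ I.extPp (I.iv URI.dom) → (q, d) ∈ I.extPp (I.iv URI.dom) →
    (c, d) ∈ I.extPp (I.iv URI.botc) → (p, q) ∈ I.extPp (I.iv URI.botp)
  disjII2 : ∀ p q c d, (p, c) ∈ I.extPp (I.iv URI.rng) → (q, d) ∈ I.extPp (I.iv URI.rng) →
    (c, d) ∈ I.extPp (I.iv URI.botc) → (p, q) ∈ I.extPp (I.iv URI.botp)
  disjII3 : ∀ c d, c ∈ I.ΔC → d ∈ I.ΔC →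
    ((c, d) ∈ I.extPp (I.iv URI.botc) ↔ (c, I.compl d) ∈ I.extPp (I.iv URI.sc))
  disjII4 : ∀ p q, p ∈ I.ΔP → q ∈ I.ΔP →
    ((p, q) ∈ I.extPp (I.iv URI.botp) ↔ (p, I.compl q) ∈ I.extPp (I.iv URI.sp))

/-- ρdf⊥¬ entailment `G ⊨⊥¬ H`. -/
def EntailsN (G H : Graph) : Prop := ∀ I : InterpN, ModelsN I G → ModelsN I H

/-! ### The canonical model of a ρdf⊥¬ graph -/

def canDR (G : Graph) : Set Term := uni G ∪ negT '' uni G ∪ rhoVocT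

def canDP' (G : Graph) : Set Term :=
  {p | p ∈ uni G ∧ ∃ τ ∈ ClN G,
      Term.uri τ.p = p ∨
      ((τ.p = URI.sp ∨ τ.p = URI.botp) ∧ (τ.s = p ∨ τ.o = p)) ∨
      ((τ.p = URI.dom ∨ τ.p = URI.rng) ∧ τ.s = p)}
    ∪ botVocT

def canDP (G : Graph) : Set Term := canDP' G ∪ negT '' canDP' G

def canDC' (G : Graph) : Set Term :=
  {c | c ∈ uni G ∧ ∃ τ ∈ ClN G,
      (τ.p = URI.typ ∧ τ.o = c) ∨
      ((τ.p = URI.sc ∨ τ.p = URI.botc) ∧ (τ.s = c ∨ τ.o = c)) ∨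
      ((τ.p = URI.dom ∨ τ.p = URI.rng) ∧ τ.o = c) ∨
      (∃ (b : Bool) (n : ℕ),
        (τ.s = Term.uri (URI.star b n) ∨ τ.o = Term.uri (URI.star b n)) ∧
        c = Term.uri (URI.res b n))}

def canDC (G : Graph) : Set Term := canDC' G ∪ negT '' canDC' G

def canDL (G : Graph) : Set Term := {t | t ∈ uni G ∧ t.isLit}

def canExtP (G : Graph) (p : Term) : Set (Term × Term) :=
  {x | ∃ u : URI, p = Term.uri u ∧ (⟨x.1, u, x.2⟩ : Triple) ∈ ClN G}

def canExtC (G : Graph) (c : Term) : Set Term :=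
  {x | x ∈ uni G ∧ (⟨x, URI.typ, c⟩ : Triple) ∈ ClN G}

/-- The canonical interpretation `I_G` of a ρdf⊥¬ graph `G`. -/
def canInterp (G : Graph) : InterpN where
  ΔR := canDR G
  ΔP := canDP G
  ΔC := canDC G
  ΔL := canDL G
  compl := negT
  extPp := canExtP G
  extPn := fun p => canExtP G (negT p)
  extCp := canExtC G
  extCn := fun c => canExtC G (negT c)
  int := id

end Rho
/-!
Soundness: each rule instance is valid in every model, so by minimality of the closure a model
of `G` satisfies every triple of `Cl G`, whose terms all lie in the vocabulary of `G`; hence it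
models every `H ⊆ Cl G`. Completeness: `Cl G` itself, read as an interpretation in which terms
denote themselves, is a model of `G`, and a ground triple holds in it only if it lies in `Cl G`.
-/

namespace Rho

section Closure

variable {rules : Finset Triple → Triple → Prop} {ok : Triple → Prop}

theorem StepNM.union_right {G H : Graph} (K : Graph) (h : StepNM rules ok G H) :
    StepNM rules ok (G ∪ K) (H ∪ K) := by
  cases h with
  | sub h => exact .sub (Finset.union_subset_union h subset_rfl)
  | rule R τ hR hr hok =>
    rw [Finset.insert_union]
    exact .rule R τ (hR.trans Finset.subset_union_left) hr hok

theorem DerivNM.union_right {G H : Graph} (K : Graph) (h : DerivNM rules ok G H) :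
    DerivNM rules ok (G ∪ K) (H ∪ K) :=
  Relation.ReflTransGen.lift (· ∪ K) (fun _ _ => StepNM.union_right K) _ _ h

theorem DerivNM.union {G H K : Graph} (hH : DerivNM rules ok G H)
    (hK : DerivNM rules ok G K) : DerivNM rules ok G (H ∪ K) := by
  have hGH := hH.union_right G
  rw [Finset.union_self, Finset.union_comm] at hGH
  have hGKH := hGH.trans (hK.union_right H)
  rwa [Finset.union_comm] at hGKH

theorem Closure.self_subset (G : Graph) : ↑G ⊆ Closure rules ok G :=
  fun _ hτ => ⟨G, .refl, hτ⟩

theorem Closure.exists_derivNM_superset {G : Graph} (R : Finset Triple)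
    (hR : ↑R ⊆ Closure rules ok G) : ∃ K, DerivNM rules ok G K ∧ R ⊆ K := by
  classical
  induction R using Finset.induction_on with
  | empty => exact ⟨G, .refl, Finset.empty_subset G⟩
  | insert τ R _ ih =>
    rw [Finset.coe_insert, Set.insert_subset_iff] at hR
    obtain ⟨K, hK, hRK⟩ := ih hR.2
    obtain ⟨K', hK', hτK'⟩ := hR.1
    exact ⟨K ∪ K', hK.union hK', Finset.insert_subset (Finset.mem_union_right K hτK')
      (hRK.trans Finset.subset_union_left)⟩

theorem Closure.closedUnder (G : Graph) : ClosedUnder rules ok (Closure rules ok G) := by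
  intro R τ hr hok hR
  obtain ⟨K, hK, hRK⟩ := Closure.exists_derivNM_superset R hR
  exact ⟨insert τ K, hK.tail (.rule R τ hRK hr hok), Finset.mem_insert_self τ K⟩

theorem Closure.minimal {G : Graph} {S : Set Triple} (hG : ↑G ⊆ S)
    (hS : ClosedUnder rules ok S) : Closure rules ok G ⊆ S := by
  rintro τ ⟨K, hK, hτ⟩
  suffices hKS : ↑K ⊆ S from hKS hτ
  clear hτ
  induction hK with
  | refl => exact hG
  | tail _ hstep ih =>
    cases hstep with
    | sub h => exact (Finset.coe_subset.2 h).trans ih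
    | rule R σ hR hr hok =>
      rw [Finset.coe_insert, Set.insert_subset_iff]
      exact ⟨hS R σ hr hok ((Finset.coe_subset.2 hR).trans ih), ih⟩

end Closure

def Triple.terms (τ : Triple) : Set Term := {τ.s, Term.uri τ.p, τ.o}

theorem uni_eq_biUnion (G : Graph) : uni G = ⋃ τ ∈ G, τ.terms := by
  ext t
  simp [uni, Triple.terms]

theorem uni_subset_iff {G : Graph} {V : Set Term} : uni G ⊆ V ↔ ∀ τ ∈ G, τ.terms ⊆ V := by
  rw [uni_eq_biUnion]
  exact Set.iUnion₂_subset_iff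

def vocab (G : Graph) : Set Term := rhoVocT ∪ uni G

theorem vocab_finite (G : Graph) : (vocab G).Finite := by
  have hvoc : rhoVoc.Finite := by simp [rhoVoc]
  refine (hvoc.image Term.uri).union ?_
  rw [uni_eq_biUnion]
  exact G.finite_toSet.biUnion fun τ _ => Set.toFinite {τ.s, Term.uri τ.p, τ.o}

theorem RuleInst.terms_subset {R : Finset Triple} {τ : Triple} (hr : RuleInst R τ) :
    τ.terms ⊆ vocab R := by
  cases hr <;> simp [Triple.terms, vocab, uni, rhoVocT, rhoVoc, Set.insert_subset_iff]

theorem terms_subset_vocab_of_mem_cl {G : Graph} {τ : Triple} (hτ : τ ∈ Cl G) :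
    τ.terms ⊆ vocab G := by
  refine Closure.minimal (S := {σ | σ.terms ⊆ vocab G}) ?_ ?_ hτ
  · exact fun σ hσ => (uni_subset_iff.1 subset_rfl σ hσ).trans Set.subset_union_right
  · exact fun R σ hr _ hR => hr.terms_subset.trans
      (Set.union_subset Set.subset_union_left (uni_subset_iff.2 hR))

theorem mem_vocab_of_mem_cl {G : Graph} {τ : Triple} (hτ : τ ∈ Cl G) :
    τ.s ∈ vocab G ∧ τ.o ∈ vocab G :=
  ⟨terms_subset_vocab_of_mem_cl hτ (by simp [Triple.terms]),
    terms_subset_vocab_of_mem_cl hτ (by simp [Triple.terms])⟩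

theorem vocab_subset_of_subset_cl {G H : Graph} (hH : ↑H ⊆ Cl G) : vocab H ⊆ vocab G :=
  Set.union_subset Set.subset_union_left
    (uni_subset_iff.2 fun _ hτ => terms_subset_vocab_of_mem_cl (hH hτ))

theorem okRdf_of_mem_cl {G : Graph} (hG : IsRdfGraph G) {τ : Triple} (hτ : τ ∈ Cl G) :
    τ.okRdf :=
  Closure.minimal (S := {σ | σ.okRdf}) hG (fun _ _ _ hok _ => hok) hτ

theorem RuleInst.mem_cl {G R : Graph} {τ : Triple} (hr : RuleInst R τ) (hok : τ.okRdf)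
    (hR : ∀ σ ∈ R, σ ∈ Cl G) : τ ∈ Cl G :=
  Closure.closedUnder G R τ hr hok hR

def Interp.Holds (I : Interp) (τ : Triple) : Prop :=
  I.iv τ.p ∈ I.ΔP ∧ (I.int τ.s, I.int τ.o) ∈ I.extP (I.iv τ.p)

theorem IsInterp.mono {I : Interp} {V V' : Set Term} (h : V' ⊆ V) (hI : IsInterp I V) :
    IsInterp I V' :=
  { hI with hlit := fun n hn => hI.hlit n (h hn), hint := fun t ht => hI.hint t (h ht) }

section Soundness

variable {I : Interp} {G : Graph}

theorem Models.holds_typ (M : Models I G) {x c : Term} (hc : I.int c ∈ I.ΔC)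
    (hx : I.int x ∈ I.extC (I.int c)) : I.Holds ⟨x, URI.typ, c⟩ :=
  ⟨M.typII1 URI.typ (by simp [rhoVoc]), (M.typI1 _ _ hc).1 hx⟩

theorem Models.holds_of_ruleInst (M : Models I G) {R : Finset Triple} {τ : Triple}
    (hR : ∀ σ ∈ R, I.Holds σ) (hr : RuleInst R τ) : I.Holds τ := by
  cases hr with
  | sp_trans a b c =>
    obtain ⟨hsp, hab⟩ := hR ⟨a, URI.sp, b⟩ (by simp)
    obtain ⟨-, hbc⟩ := hR ⟨b, URI.sp, c⟩ (by simp)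
    obtain ⟨ha, hb, -⟩ := M.sp_sub _ _ hab
    exact ⟨hsp, M.sp_trans _ _ _ ha hb (M.sp_sub _ _ hbc).2.1 hab hbc⟩
  | sp_mono d e x y =>
    obtain ⟨-, hde⟩ := hR ⟨Term.uri d, URI.sp, Term.uri e⟩ (by simp)
    obtain ⟨-, he, hsub⟩ := M.sp_sub _ _ hde
    exact ⟨he, hsub (hR ⟨x, d, y⟩ (by simp)).2⟩
  | sc_trans a b c =>
    obtain ⟨hsc, hab⟩ := hR ⟨a, URI.sc, b⟩ (by simp)
    obtain ⟨-, hbc⟩ := hR ⟨b, URI.sc, c⟩ (by simp)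
    obtain ⟨ha, hb, -⟩ := M.sc_sub _ _ hab
    exact ⟨hsc, M.sc_trans _ _ _ ha hb (M.sc_sub _ _ hbc).2.1 hab hbc⟩
  | sc_mono a b x =>
    obtain ⟨ha, hb, hsub⟩ := M.sc_sub _ _ (hR ⟨a, URI.sc, b⟩ (by simp)).2
    exact M.holds_typ hb (hsub ((M.typI1 _ _ ha).2 (hR ⟨x, URI.typ, a⟩ (by simp)).2))
  | dom d b x y =>
    have hdb := (hR ⟨Term.uri d, URI.dom, b⟩ (by simp)).2
    exact M.holds_typ (M.typII2 _ _ hdb).2 (M.typI2 _ _ _ _ hdb (hR ⟨x, d, y⟩ (by simp)).2)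
  | rng d b x y =>
    have hdb := (hR ⟨Term.uri d, URI.rng, b⟩ (by simp)).2
    exact M.holds_typ (M.typII3 _ _ hdb).2 (M.typI3 _ _ _ _ hdb (hR ⟨x, d, y⟩ (by simp)).2)
  | idom a b x y d =>
    have hab := (hR ⟨a, URI.dom, b⟩ (by simp)).2
    obtain ⟨-, -, hsub⟩ := M.sp_sub _ _ (hR ⟨Term.uri d, URI.sp, a⟩ (by simp)).2
    exact M.holds_typ (M.typII2 _ _ hab).2
      (M.typI2 _ _ _ _ hab (hsub (hR ⟨x, d, y⟩ (by simp)).2))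
  | irng a b x y d =>
    have hab := (hR ⟨a, URI.rng, b⟩ (by simp)).2
    obtain ⟨-, -, hsub⟩ := M.sp_sub _ _ (hR ⟨Term.uri d, URI.sp, a⟩ (by simp)).2
    exact M.holds_typ (M.typII3 _ _ hab).2
      (M.typI3 _ _ _ _ hab (hsub (hR ⟨x, d, y⟩ (by simp)).2))

theorem Models.holds_of_mem_cl (M : Models I G) {τ : Triple} (hτ : τ ∈ Cl G) : I.Holds τ :=
  Closure.minimal (S := {σ | I.Holds σ}) M.simple
    (fun _ _ hr _ hR => M.holds_of_ruleInst (fun _ hσ => hR hσ) hr) hτ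

theorem Models.of_subset_cl (M : Models I G) {H : Graph} (hH : ↑H ⊆ Cl G) : Models I H :=
  { M with
    interp := M.interp.mono (vocab_subset_of_subset_cl hH)
    simple := fun _ hτ => M.holds_of_mem_cl (hH hτ) }

end Soundness

section CanonicalModel

variable {G : Graph}

-- Blank nodes foreign to `G` are sent to `sp` only so that they land in the finite domain.
open Classical in
noncomputable def canInt (G : Graph) (t : Term) : Term :=
  if t.isBlank ∧ t ∉ uni G then Term.uri URI.sp else t

-- Rule (2b) only lifts triples along `sp` between URIs, so the extension of a blank node or
-- literal standing in property position is made `sp`-closed by hand.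
def canExt (G : Graph) (p : Term) : Set (Term × Term) :=
  {xy | ∃ u : URI, (⟨xy.1, u, xy.2⟩ : Triple) ∈ Cl G ∧
    (p = Term.uri u ∨ (⟨Term.uri u, URI.sp, p⟩ : Triple) ∈ Cl G)}

-- The reflexive-relaxed semantics does not separate the domains, so each of them can be the
-- vocabulary of `G`.
noncomputable def canI (G : Graph) : Interp where
  ΔR := vocab G
  ΔP := vocab G
  ΔC := vocab G
  ΔL := vocab G
  extP := canExt G
  extC := fun c => {x | (⟨x, URI.typ, c⟩ : Triple) ∈ Cl G}
  int := canInt G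

theorem canInt_of_not_isBlank {t : Term} (h : ¬ t.isBlank) : canInt G t = t :=
  if_neg fun h' => h h'.1

theorem canInt_of_mem_uni {t : Term} (h : t ∈ uni G) : canInt G t = t :=
  if_neg fun h' => h'.2 h

theorem canInt_blank_mem_vocab (n : ℕ) : canInt G (Term.blank n) ∈ vocab G := by
  by_cases h : Term.blank n ∈ uni G
  · rw [canInt_of_mem_uni h]
    exact Or.inr h
  · rw [canInt, if_pos ⟨trivial, h⟩]
    exact Or.inl ⟨URI.sp, by simp [rhoVoc], rfl⟩

theorem mem_canExt_uri_iff (hG : IsRdfGraph G) {u : URI} {x y : Term} :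
    (x, y) ∈ canExt G (Term.uri u) ↔ (⟨x, u, y⟩ : Triple) ∈ Cl G := by
  refine ⟨fun ⟨v, hv, hvu⟩ => ?_, fun h => ⟨u, h, Or.inl rfl⟩⟩
  rcases hvu with hvu | hvu
  · rwa [Term.uri.inj hvu]
  · obtain ⟨hx, hy⟩ := okRdf_of_mem_cl hG hv
    exact (RuleInst.sp_mono v u x y).mem_cl ⟨hx, hy⟩ (by simp [hv, hvu])

theorem canExt_subset_of_sp (hG : IsRdfGraph G) {p q : Term}
    (hpq : (⟨p, URI.sp, q⟩ : Triple) ∈ Cl G) : canExt G p ⊆ canExt G q := by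
  rintro ⟨x, y⟩ ⟨u, hu, rfl | hup⟩
  · exact ⟨u, hu, Or.inr hpq⟩
  · refine ⟨u, hu, Or.inr ?_⟩
    exact (RuleInst.sp_trans _ p q).mem_cl
      ⟨(okRdf_of_mem_cl hG hup).1, (okRdf_of_mem_cl hG hpq).2⟩ (by simp [hup, hpq])

theorem typ_mem_cl_of_dom (hG : IsRdfGraph G) {p c x y : Term}
    (hpc : (⟨p, URI.dom, c⟩ : Triple) ∈ Cl G) (hxy : (x, y) ∈ canExt G p) :
    (⟨x, URI.typ, c⟩ : Triple) ∈ Cl G := by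
  obtain ⟨u, hu, rfl | hup⟩ := hxy
  · exact (RuleInst.dom u c x y).mem_cl ⟨(okRdf_of_mem_cl hG hu).1, (okRdf_of_mem_cl hG hpc).2⟩
      (by simp [hu, hpc])
  · exact (RuleInst.idom p c x y u).mem_cl
      ⟨(okRdf_of_mem_cl hG hu).1, (okRdf_of_mem_cl hG hpc).2⟩ (by simp [hu, hpc, hup])

theorem typ_mem_cl_of_rng (hG : IsRdfGraph G) {p c x y : Term}
    (hpc : (⟨p, URI.rng, c⟩ : Triple) ∈ Cl G) (hxy : (x, y) ∈ canExt G p) :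
    (⟨y, URI.typ, c⟩ : Triple) ∈ Cl G := by
  obtain ⟨u, hu, rfl | hup⟩ := hxy
  · exact (RuleInst.rng u c x y).mem_cl ⟨(okRdf_of_mem_cl hG hu).2, (okRdf_of_mem_cl hG hpc).2⟩
      (by simp [hu, hpc])
  · exact (RuleInst.irng p c x y u).mem_cl
      ⟨(okRdf_of_mem_cl hG hu).2, (okRdf_of_mem_cl hG hpc).2⟩ (by simp [hu, hpc, hup])

theorem canI_iv (e : URI) : (canI G).iv e = Term.uri e :=
  canInt_of_not_isBlank id

theorem mem_canI_extP_iv_iff (hG : IsRdfGraph G) {e : URI} {x y : Term} :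
    (x, y) ∈ (canI G).extP ((canI G).iv e) ↔ (⟨x, e, y⟩ : Triple) ∈ Cl G := by
  rw [canI_iv]
  exact mem_canExt_uri_iff hG

theorem canI_holds_of_mem {τ : Triple} (hτ : τ ∈ G) : (canI G).Holds τ := by
  have hterms : τ.terms ⊆ uni G := uni_subset_iff.1 subset_rfl τ hτ
  refine ⟨by rw [canI_iv]; exact Or.inr (hterms (by simp [Triple.terms])), ?_⟩
  change (canInt G τ.s, canInt G τ.o) ∈ canExt G ((canI G).iv τ.p)
  rw [canInt_of_mem_uni (hterms (by simp [Triple.terms])),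
    canInt_of_mem_uni (hterms (by simp [Triple.terms])), canI_iv]
  exact ⟨τ.p, Closure.self_subset G hτ, Or.inl rfl⟩

theorem mem_cl_of_canI_holds (hG : IsRdfGraph G) {τ : Triple} (hs : ¬ τ.s.isBlank)
    (ho : ¬ τ.o.isBlank) (h : (canI G).Holds τ) : τ ∈ Cl G := by
  have h' := h.2
  change (canInt G τ.s, canInt G τ.o) ∈ _ at h'
  rwa [canInt_of_not_isBlank hs, canInt_of_not_isBlank ho, mem_canI_extP_iv_iff hG] at h'

theorem canI_isInterp (G : Graph) : IsInterp (canI G) (vocab G) := by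
  have hsp : Term.uri URI.sp ∈ vocab G := Or.inl ⟨URI.sp, by simp [rhoVoc], rfl⟩
  exact
    { finR := vocab_finite G
      neR := ⟨_, hsp⟩
      finP := vocab_finite G
      neP := ⟨_, hsp⟩
      finC := vocab_finite G
      neC := ⟨_, hsp⟩
      finL := vocab_finite G
      neL := ⟨_, hsp⟩
      hCR := subset_rfl
      hLR := subset_rfl
      hlit := fun _ h => h
      hextP := fun _ _ _ ⟨_, hu, _⟩ => mem_vocab_of_mem_cl hu
      hextC := fun _ _ _ hx => (mem_vocab_of_mem_cl hx).1
      hint := fun _ ht hb => Or.inl (by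
        change canInt G _ ∈ vocab G
        rwa [canInt_of_not_isBlank hb])
      hintlit := fun _ => canInt_of_not_isBlank id
      hintblank := canInt_blank_mem_vocab }

theorem canI_models (hG : IsRdfGraph G) : Models (canI G) G := by
  have hcl {τ : Triple} := @mem_vocab_of_mem_cl G τ
  have hok {τ : Triple} := @okRdf_of_mem_cl G hG τ
  have hext {e : URI} {x y : Term} := @mem_canI_extP_iv_iff G hG e x y
  refine
    { interp := canI_isInterp G
      simple := fun _ => canI_holds_of_mem
      sp_trans := fun p q r _ _ _ hpq hqr => hext.2 ?_
      sp_sub := fun p q hpq => ⟨(hcl (hext.1 hpq)).1, (hcl (hext.1 hpq)).2,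
        canExt_subset_of_sp hG (hext.1 hpq)⟩
      sc_trans := fun c d e _ _ _ hcd hde => hext.2 ?_
      sc_sub := fun c d hcd => ⟨(hcl (hext.1 hcd)).1, (hcl (hext.1 hcd)).2, fun x hx => ?_⟩
      typI1 := fun _ _ _ => hext.symm
      typI2 := fun _ _ _ _ hpc hxy => typ_mem_cl_of_dom hG (hext.1 hpc) hxy
      typI3 := fun _ _ _ _ hpc hxy => typ_mem_cl_of_rng hG (hext.1 hpc) hxy
      typII1 := fun e he => by rw [canI_iv]; exact Or.inl ⟨e, he, rfl⟩
      typII2 := fun _ _ h => hcl (hext.1 h)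
      typII3 := fun _ _ h => hcl (hext.1 h)
      typII4 := fun _ _ h => (hcl (hext.1 h)).2 }
  · replace hpq := hext.1 hpq
    replace hqr := hext.1 hqr
    exact (RuleInst.sp_trans p q r).mem_cl ⟨(hok hpq).1, (hok hqr).2⟩ (by simp [hpq, hqr])
  · replace hcd := hext.1 hcd
    replace hde := hext.1 hde
    exact (RuleInst.sc_trans c d e).mem_cl ⟨(hok hcd).1, (hok hde).2⟩ (by simp [hcd, hde])
  · replace hcd := hext.1 hcd
    change (⟨x, URI.typ, c⟩ : Triple) ∈ Cl G at hx
    exact (RuleInst.sc_mono c d x).mem_cl ⟨(hok hx).1, (hok hcd).2⟩ (by simp [hx, hcd])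

end CanonicalModel

theorem rdf_entails_iff_subset_closure_general (G H : Graph) (hG : IsRdfGraph G)
    (hg : Ground H) :
    Entails G H ↔ ↑H ⊆ Cl G :=
  ⟨fun hent τ hτ => mem_cl_of_canI_holds hG (hg τ hτ).1 (hg τ hτ).2
      ((hent _ (canI_models hG)).simple τ hτ),
    fun hsub _ M => M.of_subset_cl hsub⟩

/-- For ground `H`: `G ⊨ H` iff `H ⊆ Cl(G)`. -/
theorem rdf_entails_iff_subset_closure (G H : Graph) (hG : IsRdfGraph G)
    (hH : IsRdfGraph H) (hg : Ground H) :
    Entails G H ↔ ↑H ⊆ Cl G :=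
  rdf_entails_iff_subset_closure_general G H hG hg

end Rho
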